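/- Let 0 < α < 1, n ≥ 2, let I ⊆ [n] be nonempty, and let s > 0. Then there is no choice of finite dimensions d₁,…,dₙ and density matrix ρ on ℂ^{d₁} ⊗ ⋯ ⊗ ℂ^{dₙ} with S_α(ρ_I) = s and S_α(ρ_J) = 0 for all nonempty J ⊆ [n] with J ≠ I. (In particular, the set Σ_α^n of exactly attainable entropy vectors is not closed for n ≥ 2.) -/

import Mathlib

noncomputable section
open scoped ComplexOrder

/-- A density matrix: positive semidefinite with unit trace. -/
def IsDensityMatrix {ι : Type*} [Fintype ι] (ρ : Matrix ι ι ℂ) : Prop :=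
  ρ.PosSemidef ∧ ρ.trace = 1

/-- Reduced state (partial trace) of a multipartite matrix on the parties in `I`. -/
def reduce {n : ℕ} {d : Fin n → ℕ}
    (ρ : Matrix (∀ i, Fin (d i)) (∀ i, Fin (d i)) ℂ) (I : Finset (Fin n)) :
    Matrix (∀ i : {i : Fin n // i ∈ I}, Fin (d i.1))
           (∀ i : {i : Fin n // i ∈ I}, Fin (d i.1)) ℂ :=
  fun x x' => ∑ y : ∀ j : {j : Fin n // j ∉ I}, Fin (d j.1),
    ρ (fun i => if h : i ∈ I then x ⟨i, h⟩ else y ⟨i, h⟩)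
      (fun i => if h : i ∈ I then x' ⟨i, h⟩ else y ⟨i, h⟩)

/-- Rényi α-entropy (base 2) of a (Hermitian) matrix, via its eigenvalues. -/
def renyiS {ι : Type*} [Fintype ι] [DecidableEq ι] (α : ℝ) (ρ : Matrix ι ι ℂ) : ℝ :=
  if h : ρ.IsHermitian then (1 / (1 - α)) * Real.logb 2 (∑ i, h.eigenvalues i ^ α) else 0

/-!
For `0 < α ≠ 1`, `S_α` of a density matrix vanishes exactly when its spectrum is a point mass,
i.e. when it has rank one. A bipartite state with a pure marginal is the tensor product of its
marginals. If `I = [n]`, split `[n] = {i} ∪ {i}ᶜ`: both parts are pure, hence so is `ρ = ρ_[n]`.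
Otherwise `ρ = ρ_[n]` and `ρ_{Iᶜ}` are pure, so `ρ = ρ_I ⊗ ρ_{Iᶜ}` and `ρ_I`, a nonzero multiple of
a block of `ρ`, is pure as well. Either way `S_α(ρ_I) = 0 ≠ s`.
-/

open Matrix
open scoped Kronecker

lemma Real.rpow_eq_self_iff {x α : ℝ} (hx : 0 ≤ x) (hα0 : α ≠ 0) (hα1 : α ≠ 1) :
    x ^ α = x ↔ x = 0 ∨ x = 1 := by
  refine ⟨fun h => ?_, by rintro (rfl | rfl) <;> simp [Real.zero_rpow hα0]⟩
  by_contra! hne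
  exact hα1 ((Real.rpow_right_inj (hx.lt_of_ne' hne.1) hne.2).1 (h.trans (Real.rpow_one x).symm))

section ProbabilityVector
variable {ι : Type*} [Fintype ι] [DecidableEq ι] {p : ι → ℝ}

lemma eq_single_of_apply_eq_one (hp : 0 ≤ p) (hsum : ∑ j, p j = 1) {i : ι} (hi : p i = 1) :
    p = Pi.single i 1 := by
  have hrest : ∑ j ∈ Finset.univ.erase i, p j = 0 := by
    linarith [Finset.add_sum_erase Finset.univ p (Finset.mem_univ i)]
  funext j
  rcases eq_or_ne j i with rfl | hj
  · simpa using hi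
  · rw [Pi.single_eq_of_ne hj]
    exact (Finset.sum_eq_zero_iff_of_nonneg fun k _ => hp k).1 hrest j (by simp [hj])

lemma card_ne_zero_le_one_iff (hsum : ∑ j, p j = 1) :
    Fintype.card {j // p j ≠ 0} ≤ 1 ↔ ∃ i, p = Pi.single i 1 := by
  constructor
  · intro hcard
    obtain ⟨i, -, hi⟩ := Finset.exists_ne_zero_of_sum_ne_zero (hsum.trans_ne one_ne_zero)
    have hzero : ∀ j ≠ i, p j = 0 := fun j hj => by
      by_contra hpj
      exact hj (Subtype.ext_iff.1 (Fintype.card_le_one_iff.1 hcard ⟨j, hpj⟩ ⟨i, hi⟩))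
    refine ⟨i, funext fun j => ?_⟩
    rcases eq_or_ne j i with rfl | hj
    · rw [Pi.single_eq_same, ← hsum, Fintype.sum_eq_single j hzero]
    · rw [hzero j hj, Pi.single_eq_of_ne hj]
  · rintro ⟨i, rfl⟩
    refine Fintype.card_le_one_iff.2 fun j k => Subtype.ext ?_
    have hj := j.2; have hk := k.2
    simp only [ne_eq, Pi.single_apply, ite_eq_right_iff, one_ne_zero, imp_false, not_not] at hj hk
    rw [hj, hk]

lemma sum_rpow_eq_one_iff (hp : 0 ≤ p) (hsum : ∑ j, p j = 1) {α : ℝ} (hα0 : 0 < α)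
    (hα1 : α ≠ 1) : ∑ j, p j ^ α = 1 ↔ ∃ i, p = Pi.single i 1 := by
  have hp1 : ∀ j, p j ≤ 1 := fun j =>
    hsum ▸ Finset.single_le_sum (fun k _ => hp k) (Finset.mem_univ j)
  constructor
  · intro h
    -- `t ↦ t ^ α - t` has a constant sign on `[0, 1]`, so equal sums force termwise equality
    have hfix : ∀ j, p j ^ α = p j := by
      intro j
      rcases hα1.lt_or_gt with hlt | hgt
      · exact ((Finset.sum_eq_sum_iff_of_le fun k _ =>
          Real.self_le_rpow_of_le_one (hp k) (hp1 k) hlt.le).1 (hsum.trans h.symm) j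
            (Finset.mem_univ j)).symm
      · exact (Finset.sum_eq_sum_iff_of_le fun k _ =>
          Real.rpow_le_self_of_le_one (hp k) (hp1 k) hgt.le).1 (h.trans hsum.symm) j
            (Finset.mem_univ j)
    obtain ⟨i, -, hi⟩ := Finset.exists_ne_zero_of_sum_ne_zero (hsum.trans_ne one_ne_zero)
    exact ⟨i, eq_single_of_apply_eq_one hp hsum
      ((Real.rpow_eq_self_iff (hp i) hα0.ne' hα1).1 (hfix i) |>.resolve_left hi)⟩
  · rintro ⟨i, rfl⟩
    refine (Finset.sum_congr rfl fun j _ => (Real.rpow_eq_self_iff (hp j) hα0.ne' hα1).2 ?_).trans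
      hsum
    rcases eq_or_ne j i with rfl | hj
    · simp
    · simp [Pi.single_eq_of_ne hj]

end ProbabilityVector

namespace IsDensityMatrix
variable {ι : Type*} [Fintype ι] {σ : Matrix ι ι ℂ}

lemma ne_zero (h : IsDensityMatrix σ) : σ ≠ 0 := by
  rintro rfl
  simpa using h.2

lemma submatrix {κ : Type*} [Fintype κ] (h : IsDensityMatrix σ) (e : κ ≃ ι) :
    IsDensityMatrix (σ.submatrix e e) :=
  ⟨h.1.submatrix e, (Fintype.sum_equiv e _ _ fun _ => rfl).trans h.2⟩

variable [DecidableEq ι]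

lemma sum_eigenvalues (h : IsDensityMatrix σ) : ∑ i, h.1.1.eigenvalues i = 1 := by
  have htr := congrArg Complex.re h.2
  rw [h.1.1.trace_eq_sum_eigenvalues] at htr
  simpa using htr

lemma rank_le_one_iff (h : IsDensityMatrix σ) :
    σ.rank ≤ 1 ↔ ∃ i, h.1.1.eigenvalues = Pi.single i 1 := by
  rw [h.1.1.rank_eq_card_non_zero_eigs]
  exact card_ne_zero_le_one_iff h.sum_eigenvalues

lemma renyiS_eq_zero_iff (h : IsDensityMatrix σ) {α : ℝ} (hα0 : 0 < α) (hα1 : α ≠ 1) :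
    renyiS α σ = 0 ↔ σ.rank ≤ 1 := by
  have hnonneg : 0 ≤ h.1.1.eigenvalues := fun i => h.1.eigenvalues_nonneg i
  have hpos : 0 < ∑ i, h.1.1.eigenvalues i ^ α := by
    obtain ⟨i, -, hi⟩ := Finset.exists_ne_zero_of_sum_ne_zero
      (h.sum_eigenvalues.trans_ne one_ne_zero)
    exact Finset.sum_pos' (fun j _ => Real.rpow_nonneg (hnonneg j) α)
      ⟨i, Finset.mem_univ i, Real.rpow_pos_of_pos ((hnonneg i).lt_of_ne' hi) α⟩
  rw [h.rank_le_one_iff, ← sum_rpow_eq_one_iff hnonneg h.sum_eigenvalues hα0 hα1, renyiS,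
    dif_pos h.1.1, mul_eq_zero, or_iff_right (one_div_ne_zero (sub_ne_zero.2 hα1.symm)),
    Real.logb_eq_iff_rpow_eq two_pos (by norm_num) hpos, Real.rpow_zero, eq_comm]

lemma exists_eq_vecMulVec (h : IsDensityMatrix σ) (hr : σ.rank ≤ 1) :
    ∃ u : ι → ℂ, σ = vecMulVec u (star u) := by
  obtain ⟨i, hi⟩ := h.rank_le_one_iff.1 hr
  refine ⟨h.1.1.eigenvectorBasis i, ?_⟩
  conv_lhs => rw [h.1.1.spectral_theorem, Unitary.conjStarAlgAut_apply, hi]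
  ext x x'
  simp [mul_apply, vecMulVec_apply, diagonal, Pi.single_apply, apply_ite, Finset.sum_ite_eq']

end IsDensityMatrix

namespace Matrix

lemma vecMulVec_kronecker_vecMulVec {l m n p R : Type*} [CommSemiring R] (a : l → R) (b : m → R)
    (c : n → R) (d : p → R) :
    vecMulVec a b ⊗ₖ vecMulVec c d =
      vecMulVec (fun i => a i.1 * c i.2) (fun j => b j.1 * d j.2) := by
  ext ⟨i, i'⟩ ⟨j, j'⟩
  simp only [kroneckerMap_apply, vecMulVec_apply]
  ring

lemma rank_le_rank_kronecker_left {l m n p K : Type*} [Fintype m] [Fintype p] [Field K]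
    (M : Matrix l m K) {N : Matrix n p K} (hN : N ≠ 0) : M.rank ≤ (M ⊗ₖ N).rank := by
  obtain ⟨i, j, hij⟩ : ∃ i j, N i j ≠ 0 := by
    by_contra! h
    exact hN (ext h)
  calc M.rank = (N i j • M).rank :=
        (rank_smul_of_mem_nonZeroDivisors M (mem_nonZeroDivisors_of_ne_zero hij)).symm
    _ = ((M ⊗ₖ N).submatrix (·, i) (·, j)).rank := by
        congr 1
        ext
        simp [mul_comm]
    _ ≤ (M ⊗ₖ N).rank := rank_submatrix_le _ _ _

variable {A B R : Type*} [AddCommMonoid R]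

-- `traceSnd` traces out the second tensor factor, `traceFst` the first
def traceSnd [Fintype B] (ρ : Matrix (A × B) (A × B) R) : Matrix A A R :=
  fun x x' => ∑ y, ρ (x, y) (x', y)

def traceFst [Fintype A] (ρ : Matrix (A × B) (A × B) R) : Matrix B B R :=
  fun y y' => ∑ x, ρ (x, y) (x, y')

lemma trace_traceSnd [Fintype A] [Fintype B] (ρ : Matrix (A × B) (A × B) R) :
    ρ.traceSnd.trace = ρ.trace := by
  simp [trace, traceSnd, Fintype.sum_prod_type]

lemma traceSnd_eq_sum_submatrix [Fintype B] (ρ : Matrix (A × B) (A × B) R) :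
    traceSnd ρ = ∑ y, ρ.submatrix (·, y) (·, y) := by
  ext x x'
  simp [traceSnd, Matrix.sum_apply]

lemma traceSnd_of_unique [Fintype B] [Unique B] (ρ : Matrix (A × B) (A × B) R) :
    ρ.traceSnd = ρ.submatrix (Equiv.prodUnique A B).symm (Equiv.prodUnique A B).symm := by
  ext x x'
  simp [traceSnd]

end Matrix

section Bipartite
variable {A B : Type*} [Fintype A] [Fintype B] {ρ : Matrix (A × B) (A × B) ℂ}

lemma IsDensityMatrix.traceSnd (h : IsDensityMatrix ρ) : IsDensityMatrix ρ.traceSnd := by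
  refine ⟨?_, ρ.trace_traceSnd.trans h.2⟩
  rw [traceSnd_eq_sum_submatrix]
  exact posSemidef_sum _ fun y _ => h.1.submatrix _

lemma IsDensityMatrix.traceFst (h : IsDensityMatrix ρ) : IsDensityMatrix ρ.traceFst :=
  (h.submatrix (Equiv.prodComm B A)).traceSnd

lemma Matrix.PosSemidef.sum_mul_eq_zero_of_traceFst [DecidableEq A] (h : ρ.PosSemidef) {v : B → ℂ}
    (hv : star v ⬝ᵥ ρ.traceFst *ᵥ v = 0) (w : A × B) (x : A) :
    ∑ y, ρ w (x, y) * v y = 0 := by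
  -- the forms `⟪u x, ρ u x⟫ ≥ 0`, `u x = e_x ⊗ v`, sum to `⟪v, traceFst ρ v⟫ = 0`, so all vanish
  set u : A → A × B → ℂ := fun x p => if p.1 = x then v p.2 else 0
  have hsum : ∑ x, star (u x) ⬝ᵥ ρ *ᵥ u x = 0 := by
    rw [← hv]
    simp only [u, traceFst, dotProduct, mulVec, Pi.star_apply, RCLike.star_def,
      apply_ite (starRingEnd ℂ), map_zero, mul_ite, mul_zero, ite_mul, zero_mul,
      Fintype.sum_prod_type, Finset.sum_ite_irrel, Finset.sum_const_zero, Finset.sum_ite_eq',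
      Finset.mem_univ, ↓reduceIte, Finset.mul_sum, Finset.sum_mul]
    exact Finset.sum_comm.trans (Finset.sum_congr rfl fun _ _ => Finset.sum_comm)
  have hx := (Finset.sum_eq_zero_iff_of_nonneg fun x _ => h.dotProduct_mulVec_nonneg (u x)).1
    hsum x (Finset.mem_univ x)
  simpa [u, mulVec, dotProduct, Fintype.sum_prod_type] using
    congrFun ((h.dotProduct_mulVec_zero_iff (u x)).1 hx) w

lemma IsDensityMatrix.eq_kronecker_of_rank_traceFst_le_one [DecidableEq A] [DecidableEq B]
    (h : IsDensityMatrix ρ) (hr : ρ.traceFst.rank ≤ 1) : ρ = ρ.traceSnd ⊗ₖ ρ.traceFst := by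
  obtain ⟨b, hb⟩ := h.traceFst.exists_eq_vecMulVec hr
  have hnorm : b ⬝ᵥ star b = 1 := by
    rw [← trace_vecMulVec, ← hb]
    exact h.traceFst.2
  -- `Pi.single y 1 - conj (b y) • b` is orthogonal to `b`, hence in the kernel of `traceFst ρ`
  have hcol : ∀ w x y, ρ w (x, y) = star (b y) * ∑ y', ρ w (x, y') * b y' := by
    intro w x y
    have hv : star (Pi.single y 1 - star (b y) • b) ⬝ᵥ
        ρ.traceFst *ᵥ (Pi.single y 1 - star (b y) • b) = 0 := by
      simp [hb, vecMulVec_mulVec, dotProduct_comm (star b), hnorm]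
    have := h.1.sum_mul_eq_zero_of_traceFst hv w x
    simp only [Pi.sub_apply, Pi.single_apply, Pi.smul_apply, smul_eq_mul, mul_sub, mul_ite,
      mul_one, mul_zero, Finset.sum_sub_distrib, Finset.sum_ite_eq', Finset.mem_univ, ↓reduceIte,
      sub_eq_zero] at this
    rw [this, Finset.mul_sum]
    exact Finset.sum_congr rfl fun _ _ => by ring
  have hrow : ∀ w x y, ρ (x, y) w = b y * ∑ y', star (b y') * ρ (x, y') w := by
    intro w x y
    rw [← h.1.1.apply, hcol]
    simp only [star_mul', star_sum, star_star, Finset.mul_sum, h.1.1.apply]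
    exact Finset.sum_congr rfl fun _ _ => by ring
  have hprod : ∀ x y x' y', ρ (x, y) (x', y') =
      b y * star (b y') * ∑ y₂, ∑ y₁, star (b y₁) * ρ (x, y₁) (x', y₂) * b y₂ := by
    intro x y x' y'
    rw [hcol, Finset.mul_sum, Finset.mul_sum]
    refine Finset.sum_congr rfl fun y₂ _ => ?_
    rw [hrow, ← Finset.sum_mul]
    ring
  ext ⟨x, y⟩ ⟨x', y'⟩
  simp only [dotProduct, Pi.star_apply] at hnorm
  rw [kroneckerMap_apply, hb, vecMulVec_apply, Matrix.traceSnd, hprod x y x' y',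
    Finset.sum_congr rfl fun y'' _ => hprod x y'' x' y'', ← Finset.sum_mul, hnorm, Pi.star_apply]
  ring

lemma IsDensityMatrix.rank_le_one_of_marginals [DecidableEq A] [DecidableEq B]
    (h : IsDensityMatrix ρ) (hA : ρ.traceSnd.rank ≤ 1) (hB : ρ.traceFst.rank ≤ 1) :
    ρ.rank ≤ 1 := by
  obtain ⟨a, ha⟩ := h.traceSnd.exists_eq_vecMulVec hA
  obtain ⟨b, hb⟩ := h.traceFst.exists_eq_vecMulVec hB
  rw [h.eq_kronecker_of_rank_traceFst_le_one hB, ha, hb, vecMulVec_kronecker_vecMulVec]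
  exact rank_vecMulVec_le _ _

lemma IsDensityMatrix.rank_traceSnd_le_rank [DecidableEq A] [DecidableEq B]
    (h : IsDensityMatrix ρ) (hB : ρ.traceFst.rank ≤ 1) : ρ.traceSnd.rank ≤ ρ.rank := by
  conv_rhs => rw [h.eq_kronecker_of_rank_traceFst_le_one hB]
  exact rank_le_rank_kronecker_left _ h.traceFst.ne_zero

end Bipartite

def Equiv.piSubtypeCongr {α : Type*} {β : α → Type*} {p q : α → Prop} (h : ∀ a, p a ↔ q a) :
    (∀ a : Subtype p, β a) ≃ (∀ a : Subtype q, β a) where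
  toFun f a := f ⟨a, (h a).2 a.2⟩
  invFun g a := g ⟨a, (h a).1 a.2⟩
  left_inv _ := rfl
  right_inv _ := rfl

section Reduce
variable {n : ℕ} {d : Fin n → ℕ}

abbrev splitEquiv (J : Finset (Fin n)) :
    (∀ i : {i // i ∈ J}, Fin (d i)) × (∀ i : {i // i ∉ J}, Fin (d i)) ≃ ∀ i, Fin (d i) :=
  (Equiv.piEquivPiSubtypeProd (· ∈ J) (fun i => Fin (d i))).symm

abbrev complPiEquiv (J : Finset (Fin n)) :
    (∀ i : {i // i ∉ J}, Fin (d i)) ≃ (∀ i : {i // i ∈ Jᶜ}, Fin (d i)) :=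
  Equiv.piSubtypeCongr (β := fun i => Fin (d i)) fun _ => Finset.mem_compl.symm

lemma reduce_eq_traceSnd (ρ : Matrix (∀ i, Fin (d i)) (∀ i, Fin (d i)) ℂ) (J : Finset (Fin n)) :
    reduce ρ J = (ρ.submatrix (splitEquiv J) (splitEquiv J)).traceSnd := rfl

lemma traceFst_split_eq_reduce_compl (ρ : Matrix (∀ i, Fin (d i)) (∀ i, Fin (d i)) ℂ)
    (J : Finset (Fin n)) :
    (ρ.submatrix (splitEquiv J) (splitEquiv J)).traceFst =
      (reduce ρ Jᶜ).submatrix (complPiEquiv J) (complPiEquiv J) := by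
  ext y y'
  refine Fintype.sum_equiv (Equiv.piSubtypeCongr (β := fun i => Fin (d i)) fun _ => by simp)
    _ _ fun x => ?_
  rw [submatrix_apply]
  congr 1 <;> funext i <;> by_cases hi : i ∈ J <;> simp [hi, Equiv.piSubtypeCongr]

lemma rank_reduce_univ (ρ : Matrix (∀ i, Fin (d i)) (∀ i, Fin (d i)) ℂ) :
    (reduce ρ Finset.univ).rank = ρ.rank := by
  have : IsEmpty {i : Fin n // i ∉ Finset.univ} := ⟨fun i => i.2 (Finset.mem_univ _)⟩
  have : Unique (∀ i : {i : Fin n // i ∉ Finset.univ}, Fin (d i)) := Pi.uniqueOfIsEmpty _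
  rw [reduce_eq_traceSnd, traceSnd_of_unique, rank_submatrix, rank_submatrix]

lemma IsDensityMatrix.reduce {ρ : Matrix (∀ i, Fin (d i)) (∀ i, Fin (d i)) ℂ}
    (h : IsDensityMatrix ρ) (J : Finset (Fin n)) : IsDensityMatrix (reduce ρ J) :=
  (h.submatrix (splitEquiv J)).traceSnd

end Reduce

theorem renyi_axis_not_attained_general (α : ℝ) (hα0 : 0 < α) (hα1 : α < 1)
    (n : ℕ) (hn : 2 ≤ n) (I : Finset (Fin n))
    (s : ℝ) (hs : 0 < s) :
    ¬ ∃ (d : Fin n → ℕ) (ρ : Matrix (∀ i, Fin (d i)) (∀ i, Fin (d i)) ℂ),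
        IsDensityMatrix ρ ∧
        renyiS α (reduce ρ I) = s ∧
        ∀ J : Finset (Fin n), J.Nonempty → J ≠ I → renyiS α (reduce ρ J) = 0 := by
  rintro ⟨d, ρ, hρ, hρI, hρJ⟩
  have : Nontrivial (Fin n) := Fin.nontrivial_iff_two_le.2 hn
  have hpure : ∀ J, J.Nonempty → J ≠ I → (reduce ρ J).rank ≤ 1 := fun J hJ hJI =>
    ((hρ.reduce J).renyiS_eq_zero_iff hα0 hα1.ne).1 (hρJ J hJ hJI)
  have hcompl : ∀ J, (reduce ρ Jᶜ).rank ≤ 1 →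
      (ρ.submatrix (splitEquiv J) (splitEquiv J)).traceFst.rank ≤ 1 := fun J h => by
    rwa [traceFst_split_eq_reduce_compl, rank_submatrix]
  suffices (reduce ρ I).rank ≤ 1 by
    rw [((hρ.reduce I).renyiS_eq_zero_iff hα0 hα1.ne).2 this] at hρI
    exact hs.ne hρI
  by_cases hIu : I = Finset.univ
  · subst hIu
    obtain ⟨i, j, hij⟩ := exists_pair_ne (Fin n)
    rw [rank_reduce_univ, ← rank_submatrix ρ (splitEquiv {i}) (splitEquiv {i})]
    refine (hρ.submatrix _).rank_le_one_of_marginals ?_ (hcompl _ ?_)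
    · refine hpure {i} (Finset.singleton_nonempty i) fun h => ?_
      simpa [hij.symm] using h.ge (Finset.mem_univ j)
    · refine hpure {i}ᶜ ⟨j, by simpa using hij.symm⟩ fun h => ?_
      simpa using h.ge (Finset.mem_univ i)
  · have hIc : (reduce ρ Iᶜ).rank ≤ 1 := hpure Iᶜ
      (Finset.nonempty_iff_ne_empty.2 <| mt (Finset.compl_eq_empty_iff I).1 hIu) compl_ne_self
    calc (reduce ρ I).rank ≤ (ρ.submatrix (splitEquiv I) (splitEquiv I)).rank :=
          (hρ.submatrix (splitEquiv I)).rank_traceSnd_le_rank (hcompl I hIc)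
      _ = (reduce ρ Finset.univ).rank := by rw [rank_submatrix, rank_reduce_univ]
      _ ≤ 1 := hpure Finset.univ Finset.univ_nonempty (Ne.symm hIu)

/-- Remark 1: for `n ≥ 2`, no state attains the axis vector `s·δ_I` exactly. -/
theorem renyi_axis_not_attained (α : ℝ) (hα0 : 0 < α) (hα1 : α < 1)
    (n : ℕ) (hn : 2 ≤ n) (I : Finset (Fin n)) (hI : I.Nonempty)
    (s : ℝ) (hs : 0 < s) :
    ¬ ∃ (d : Fin n → ℕ) (ρ : Matrix (∀ i, Fin (d i)) (∀ i, Fin (d i)) ℂ),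
        IsDensityMatrix ρ ∧
        renyiS α (reduce ρ I) = s ∧
        ∀ J : Finset (Fin n), J.Nonempty → J ≠ I → renyiS α (reduce ρ J) = 0 :=
  renyi_axis_not_attained_general α hα0 hα1 n hn I s hs

end
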